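/- arXiv:1604.00726 — 3 statements merged into one kernel-verified Lean document; each statement's English description precedes it below -/
import Mathlib

section
/- Let p be an odd prime with p coprime to 3. An element (x, y) of the finite quadratic form (-1/6) ⊕ (-1/(2p²)) on C₆ ⊕ C_{2p²} is isotropic (i.e. p²x² + 3y² ≡ 0 mod 12p²) if and only if (x, y) is of the form (0, 2kp) or (3, (2k+1)p) for some integer k. -/
/-!
Isotropy forces `p ∣ y`: reducing mod `p²` gives `p² ∣ 3y²`, and `p` is prime to `3`. Writing
`y = m p` and cancelling `p²` leaves `12 ∣ x² + 3m²`, a condition on `x mod 6` and `m mod 2` only,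
which holds exactly for `(0, even)` and `(3, odd)`.
-/

theorem Int.dvd_sq_mul_sq_add_mul_sq_iff {n c p : ℤ} (hpc : IsCoprime p c) (hp : p ≠ 0)
    (x y : ℤ) :
    n * p ^ 2 ∣ p ^ 2 * x ^ 2 + c * y ^ 2 ↔ ∃ m, y = m * p ∧ n ∣ x ^ 2 + c * m ^ 2 := by
  have hfactor (m : ℤ) : p ^ 2 * x ^ 2 + c * (m * p) ^ 2 = p ^ 2 * (x ^ 2 + c * m ^ 2) := by ring
  constructor
  · intro h
    have hcy : p ^ 2 ∣ c * y ^ 2 :=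
      (dvd_add_right (dvd_mul_right _ _)).mp ((dvd_mul_left _ _).trans h)
    obtain ⟨m, rfl⟩ := (Int.pow_dvd_pow_iff two_ne_zero).mp (hpc.pow_left.dvd_of_dvd_mul_left hcy)
    rw [mul_comm p, hfactor, mul_comm n] at h
    exact ⟨m, mul_comm _ _, (mul_dvd_mul_iff_left (pow_ne_zero 2 hp)).mp h⟩
  · rintro ⟨m, rfl, hm⟩
    rw [hfactor, mul_comm n]
    exact mul_dvd_mul_left _ hm

theorem Int.exists_eq_mul_of_modEq_mul_sq {d p n y : ℤ} (h : y ≡ n * p [ZMOD d * p ^ 2]) :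
    ∃ m, y = m * p ∧ m ≡ n [ZMOD d] := by
  obtain ⟨t, ht⟩ := Int.modEq_iff_dvd.mp h
  exact ⟨n - d * p * t, by linear_combination -ht, Int.modEq_iff_dvd.mpr ⟨p * t, by ring⟩⟩

theorem Int.twelve_dvd_sq_add_three_mul_sq_iff (x m : ℤ) :
    12 ∣ x ^ 2 + 3 * m ^ 2 ↔
      (x ≡ 0 [ZMOD 6] ∧ m ≡ 0 [ZMOD 2]) ∨ (x ≡ 3 [ZMOD 6] ∧ m ≡ 1 [ZMOD 2]) := by
  have hreduce : x ^ 2 + 3 * m ^ 2 = (x % 6) ^ 2 + 3 * (m % 2) ^ 2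
      + 12 * (x / 6 * (3 * (x / 6) + x % 6) + m / 2 * (m / 2 + m % 2)) := by
    linear_combination -(x + 6 * (x / 6) + x % 6) * Int.mul_ediv_add_emod x 6
      - 3 * (m + 2 * (m / 2) + m % 2) * Int.mul_ediv_add_emod m 2
  rw [hreduce, dvd_add_left (dvd_mul_right _ _)]
  unfold Int.ModEq
  have hr := Int.emod_nonneg x (by norm_num : (6 : ℤ) ≠ 0)
  have hr' := Int.emod_lt_of_pos x (by norm_num : (0 : ℤ) < 6)
  have hs := Int.emod_nonneg m (by norm_num : (2 : ℤ) ≠ 0)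
  have hs' := Int.emod_lt_of_pos m (by norm_num : (0 : ℤ) < 2)
  interval_cases x % 6 <;> interval_cases m % 2 <;> decide

theorem stmt_0_general (p : ℕ) (h3 : Nat.Coprime p 3)
    (x y : ℤ) :
    ((12 * (p : ℤ) ^ 2) ∣ ((p : ℤ) ^ 2 * x ^ 2 + 3 * y ^ 2)) ↔
      ((∃ k : ℤ, x ≡ 0 [ZMOD 6] ∧ y ≡ 2 * k * (p : ℤ) [ZMOD 2 * (p : ℤ) ^ 2]) ∨
       (∃ k : ℤ, x ≡ 3 [ZMOD 6] ∧ y ≡ (2 * k + 1) * (p : ℤ) [ZMOD 2 * (p : ℤ) ^ 2])) := by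
  have hp : (p : ℤ) ≠ 0 := by rintro h; simp_all
  rw [Int.dvd_sq_mul_sq_add_mul_sq_iff (by exact_mod_cast Nat.isCoprime_iff_coprime.mpr h3) hp]
  constructor
  · rintro ⟨m, rfl, hm⟩
    rcases (Int.twelve_dvd_sq_add_three_mul_sq_iff x m).mp hm with ⟨hx, hm2⟩ | ⟨hx, hm2⟩
    · obtain ⟨k, rfl⟩ : ∃ k, m = 2 * k := ⟨m / 2, by unfold Int.ModEq at hm2; omega⟩
      exact .inl ⟨k, hx, rfl⟩
    · obtain ⟨k, rfl⟩ : ∃ k, m = 2 * k + 1 := ⟨m / 2, by unfold Int.ModEq at hm2; omega⟩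
      exact .inr ⟨k, hx, rfl⟩
  · rintro (⟨k, hx, hy⟩ | ⟨k, hx, hy⟩) <;>
      obtain ⟨m, rfl, hm⟩ := Int.exists_eq_mul_of_modEq_mul_sq hy <;>
      refine ⟨m, rfl, (Int.twelve_dvd_sq_add_three_mul_sq_iff x m).mpr ?_⟩ <;>
      unfold Int.ModEq at * <;> omega

/-- Let p be an odd prime with p coprime to 3. An element (x, y) of the
finite quadratic form (-1/6) ⊕ (-1/(2p²)) on C₆ ⊕ C_{2p²} is isotropic
(i.e. p²x² + 3y² ≡ 0 mod 12p²) iff (x,y) is of the form (0, 2kp) or (3, (2k+1)p). -/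
theorem stmt_0 (p : ℕ) (hp : p.Prime) (hodd : Odd p) (h3 : Nat.Coprime p 3)
    (x y : ℤ) :
    ((12 * (p : ℤ) ^ 2) ∣ ((p : ℤ) ^ 2 * x ^ 2 + 3 * y ^ 2)) ↔
      ((∃ k : ℤ, x ≡ 0 [ZMOD 6] ∧ y ≡ 2 * k * (p : ℤ) [ZMOD 2 * (p : ℤ) ^ 2]) ∨
       (∃ k : ℤ, x ≡ 3 [ZMOD 6] ∧ y ≡ (2 * k + 1) * (p : ℤ) [ZMOD 2 * (p : ℤ) ^ 2])) :=
  stmt_0_general p h3 x y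
end

section
/- Let p > 3 be prime and let D = (Z/6Z) ⊕ (Z/(2p²)Z) with bilinear form b((x,y),(x',y')) = -xx'/6 - yy'/(2p²) in Q/Z. If H = ⟨(3, p)⟩, then H^⊥ = ⟨(1,p)⟩ ≅ C₃ ⊕ C_{2p}, and D/H^⊥ ≅ C₂ ⊕ C_p. -/
/-- Vanishing of the bilinear form b((x,y),(x',y')) = -xx'/6 - yy'/(2p²) in Q/Z on
D = (Z/6) ⊕ (Z/2p²): b = 0 iff 6p² ∣ p²xx' + 3yy'. -/
def BzeroD3 (p : ℕ) (v h : ZMod 6 × ZMod (2 * p ^ 2)) : Prop :=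
  (6 * (p : ℤ) ^ 2) ∣
    ((p : ℤ) ^ 2 * (v.1.val : ℤ) * (h.1.val : ℤ) + 3 * (v.2.val : ℤ) * (h.2.val : ℤ))

lemma valcast {n : ℕ} [NeZero n] (a : ℤ) : (((a : ZMod n)).val : ℤ) ≡ a [ZMOD n] := by
  rw [ZMod.val_intCast]; exact Int.emod_emod_of_dvd a dvd_rfl

lemma natcast_val {n : ℕ} [NeZero n] (x : ZMod n) : ((x.val : ℕ) : ZMod n) = x := by
  simp [ZMod.natCast_val, ZMod.cast_id]

lemma smul_pair (p : ℕ) (k : ℤ) (u : ZMod 6) :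
    k • ((u, ((p:ℕ) : ZMod (2*p^2))) : ZMod 6 × ZMod (2*p^2))
      = (k • u, ((k * p : ℤ) : ZMod (2*p^2))) := by
  refine Prod.ext rfl ?_
  show k • ((p:ℕ) : ZMod (2*p^2)) = _
  rw [zsmul_eq_mul]; push_cast; ring

lemma aux_c {p : ℕ} (hp : p.Prime) (h3 : 3 < p) : ∃ c : ℤ, 2*(p:ℤ)^2+1 = 3*c := by
  have h3p : ¬ (3 ∣ p) := by
    intro hd
    have := (Nat.prime_dvd_prime_iff_eq (by norm_num) hp).mp hd
    omega
  have : (p:ℤ) = 3*((p:ℤ)/3)+1 ∨ (p:ℤ) = 3*((p:ℤ)/3)+2 := by omega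
  rcases this with h | h <;> rw [h]
  · exact ⟨6*((p:ℤ)/3)^2+4*((p:ℤ)/3)+1, by ring⟩
  · exact ⟨6*((p:ℤ)/3)^2+8*((p:ℤ)/3)+3, by ring⟩

lemma memP_iff {p : ℕ} (hp : p.Prime) (h3 : 3 < p) (v : ZMod 6 × ZMod (2*p^2)) :
    v ∈ AddSubgroup.zmultiples (((1:ZMod 6), ((p:ℕ) : ZMod (2*p^2))) : ZMod 6 × ZMod (2*p^2))
      ↔ (2*(p:ℤ)) ∣ ((p:ℤ) * (v.1.val : ℤ) - (v.2.val : ℤ)) := by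
  haveI : NeZero (2*p^2) := ⟨by positivity⟩
  rw [AddSubgroup.mem_zmultiples_iff]
  constructor
  · rintro ⟨k, hk⟩
    rw [smul_pair] at hk
    have hk1 : ((k:ℤ) : ZMod 6) = v.1 := by
      have := congrArg Prod.fst hk
      simpa [zsmul_eq_mul] using this
    have hk2 : ((k * p : ℤ) : ZMod (2*p^2)) = v.2 := congrArg Prod.snd hk
    have d1 : (6:ℤ) ∣ k - (v.1.val : ℤ) := by
      have h := valcast (n := 6) k
      rw [hk1] at h
      exact h.dvd
    have d2 : ((2*p^2 : ℕ):ℤ) ∣ k * p - (v.2.val : ℤ) := by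
      have h := valcast (n := 2*p^2) (k * p)
      rw [hk2] at h
      exact h.dvd
    obtain ⟨u, hu⟩ := d1
    obtain ⟨w, hw⟩ := d2
    push_cast at hw
    exact ⟨-3*u + p*w, by linear_combination (-(p:ℤ))*hu + hw⟩
  · rintro ⟨t, ht⟩
    obtain ⟨c, hcc⟩ := aux_c hp h3
    refine ⟨(v.1.val : ℤ) - 6*t*c, ?_⟩
    rw [smul_pair]
    have h6 : (6 : ZMod 6) = 0 := by decide
    refine Prod.ext ?_ ?_
    · show ((v.1.val : ℤ) - 6*t*c) • (1 : ZMod 6) = v.1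
      rw [zsmul_eq_mul, mul_one]
      push_cast [h6]
      simp [natcast_val v.1]
    · show ((((v.1.val : ℤ) - 6*t*c) * p : ℤ) : ZMod (2*p^2)) = v.2
      have hd : ((2*p^2 : ℕ):ℤ) ∣ (((v.1.val : ℤ) - 6*t*c) * p - (v.2.val : ℤ)) := by
        refine ⟨-2*p*t, ?_⟩
        push_cast
        linear_combination ht + 2*(p:ℤ)*t*hcc
      have h0 := (ZMod.intCast_zmod_eq_zero_iff_dvd _ (2*p^2)).mpr hd
      push_cast at h0
      push_cast
      linear_combination h0 + natcast_val v.2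

lemma part1 {p : ℕ} (hp : p.Prime) (h3 : 3 < p) (v : ZMod 6 × ZMod (2*p^2)) :
    (∀ h ∈ AddSubgroup.zmultiples (((3:ZMod 6), ((p:ℕ) : ZMod (2*p^2))) : ZMod 6 × ZMod (2*p^2)),
        BzeroD3 p v h)
      ↔ v ∈ AddSubgroup.zmultiples (((1:ZMod 6), ((p:ℕ) : ZMod (2*p^2))) : ZMod 6 × ZMod (2*p^2)) := by
  haveI : NeZero (2*p^2) := ⟨by positivity⟩
  have hplt : p < 2*p^2 := by nlinarith
  have hval3 : ((3:ZMod 6)).val = 3 := rfl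
  have hvalp : (((p:ℕ) : ZMod (2*p^2))).val = p := ZMod.val_natCast_of_lt hplt
  constructor
  · intro hv
    have h0 := hv _ (AddSubgroup.mem_zmultiples _)
    rw [BzeroD3] at h0
    rw [hval3, hvalp] at h0
    obtain ⟨m, hm⟩ := h0
    -- 3p²a + 3pb = 6p²m  ⟹  pa + b = 2pm
    have hpne : (3*(p:ℤ)) ≠ 0 := by positivity
    have hpb : (p:ℤ) * (v.1.val:ℤ) + (v.2.val:ℤ) = 2*p*m := by
      apply mul_left_cancel₀ hpne
      push_cast at hm ⊢
      linear_combination hm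
    rw [memP_iff hp h3]
    exact ⟨(v.1.val:ℤ) - m, by linear_combination -hpb⟩
  · intro hv h hh
    rw [memP_iff hp h3] at hv
    obtain ⟨t, ht⟩ := hv
    obtain ⟨c, hcc⟩ := aux_c hp h3
    obtain ⟨n, hn⟩ := AddSubgroup.mem_zmultiples_iff.mp hh
    rw [smul_pair] at hn
    -- congruences for h
    have hn1 : ((3*n : ℤ) : ZMod 6) = h.1 := by
      have := congrArg Prod.fst hn
      rw [zsmul_eq_mul] at this
      rw [← this]; push_cast; ring
    have hn2 : ((n * p : ℤ) : ZMod (2*p^2)) = h.2 := congrArg Prod.snd hn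
    have dC : (6:ℤ) ∣ 3*n - (h.1.val : ℤ) := by
      have hh := valcast (n := 6) (3*n); rw [hn1] at hh; exact hh.dvd
    have dD : ((2*p^2 : ℕ):ℤ) ∣ n * p - (h.2.val : ℤ) := by
      have hh := valcast (n := 2*p^2) (n*p); rw [hn2] at hh; exact hh.dvd
    obtain ⟨γ, hγ⟩ := dC
    obtain ⟨δ, hδ⟩ := dD
    push_cast at hδ
    -- congruences for v : reconstruct k from memP data:
    -- from ht : p*a - b = 2pt, set k := a - 6tc as in memP; instead reuse: v ∈ P
    -- derive a, b expressions. We have p*a - b = 2*p*t.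
    rw [BzeroD3]
    have ha : (h.1.val : ℤ) = 3*n - 6*γ := by linarith
    have hb : (h.2.val : ℤ) = n*p - 2*p^2*δ := by linarith
    have hbb : (v.2.val:ℤ) = p*((v.1.val:ℤ) - 2*t) := by linarith
    refine ⟨n*((v.1.val:ℤ)-t) - (v.1.val:ℤ)*γ - p*((v.1.val:ℤ)-2*t)*δ, ?_⟩
    rw [ha, hb, hbb]
    push_cast
    ring

lemma part2 {p : ℕ} (hp : p.Prime) (h3 : 3 < p) :
    Nonempty ((AddSubgroup.zmultiples
        (((1:ZMod 6), ((p:ℕ) : ZMod (2*p^2))) : ZMod 6 × ZMod (2*p^2))) ≃+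
      (ZMod 3 × ZMod (2*p))) := by
  haveI : NeZero (2*p^2) := ⟨by positivity⟩
  haveI : NeZero (3*(2*p)) := ⟨by positivity⟩
  set y1 : ZMod 6 × ZMod (2*p^2) := ((1:ZMod 6), ((p:ℕ) : ZMod (2*p^2))) with hy1
  have hzero : (zmultiplesHom _ y1) (((3*(2*p) : ℕ) : ℤ)) = 0 := by
    show (((3*(2*p) : ℕ) : ℤ)) • y1 = 0
    rw [hy1, smul_pair]
    refine Prod.ext ?_ ?_
    · show (((3*(2*p) : ℕ) : ℤ)) • (1 : ZMod 6) = 0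
      rw [zsmul_eq_mul, mul_one, ZMod.intCast_zmod_eq_zero_iff_dvd]
      exact ⟨p, by push_cast; ring⟩
    · show ((((3*(2*p) : ℕ) : ℤ) * p : ℤ) : ZMod (2*p^2)) = 0
      rw [ZMod.intCast_zmod_eq_zero_iff_dvd]
      exact ⟨3, by push_cast; ring⟩
  set g : ZMod (3*(2*p)) →+ (ZMod 6 × ZMod (2*p^2)) :=
    ZMod.lift _ ⟨zmultiplesHom _ y1, hzero⟩ with hg0
  have hg : ∀ k : ℤ, g ((k : ℤ) : ZMod (3*(2*p))) = k • y1 := fun k =>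
    ZMod.lift_coe _ _ k
  have hinj : Function.Injective g := by
    rw [injective_iff_map_eq_zero]
    intro x hx
    obtain ⟨k, rfl⟩ := ZMod.intCast_surjective x
    rw [hg, hy1, smul_pair] at hx
    have h1 : ((k:ℤ) : ZMod 6) = 0 := by
      have := congrArg Prod.fst hx
      simpa [zsmul_eq_mul] using this
    have h2 : ((k*p : ℤ) : ZMod (2*p^2)) = 0 := congrArg Prod.snd hx
    rw [ZMod.intCast_zmod_eq_zero_iff_dvd] at h1 h2
    rw [ZMod.intCast_zmod_eq_zero_iff_dvd]
    obtain ⟨u, hu⟩ := h1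
    have hp' : Prime (p:ℤ) := Nat.prime_iff_prime_int.mp hp
    have hpu : (p:ℤ) ∣ 3*u := by
      obtain ⟨w, hw⟩ := h2
      refine ⟨w, ?_⟩
      have h2p : (2*(p:ℤ)) ≠ 0 := by positivity
      apply mul_left_cancel₀ h2p
      push_cast at hw
      rw [hu] at hw
      linear_combination hw
    rcases hp'.dvd_mul.mp hpu with h3d | hud
    · exfalso
      have := Int.le_of_dvd (by norm_num) h3d
      omega
    · obtain ⟨w', hw'⟩ := hud
      exact ⟨w', by push_cast; rw [hu, hw']; ring⟩
  have hrange : g.range = AddSubgroup.zmultiples y1 := by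
    apply le_antisymm
    · rintro w ⟨x, rfl⟩
      obtain ⟨k, rfl⟩ := ZMod.intCast_surjective x
      rw [hg]
      exact AddSubgroup.mem_zmultiples_iff.mpr ⟨k, rfl⟩
    · rintro w hw
      obtain ⟨k, hk⟩ := AddSubgroup.mem_zmultiples_iff.mp hw
      exact ⟨(k : ZMod (3*(2*p))), by rw [hg, hk]⟩
  have hcop : Nat.Coprime 3 (2*p) :=
    Nat.Coprime.mul_right (by decide) ((Nat.coprime_primes (by norm_num) hp).mpr (by omega))
  exact ⟨((AddEquiv.addSubgroupCongr hrange.symm).trans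
    (AddMonoidHom.ofInjective hinj).symm).trans (ZMod.chineseRemainder hcop).toAddEquiv⟩

lemma part3 {p : ℕ} (hp : p.Prime) (h3 : 3 < p) :
    Nonempty (((ZMod 6 × ZMod (2*p^2)) ⧸ AddSubgroup.zmultiples
        (((1:ZMod 6), ((p:ℕ) : ZMod (2*p^2))) : ZMod 6 × ZMod (2*p^2))) ≃+
      (ZMod 2 × ZMod p)) := by
  haveI : NeZero (2*p^2) := ⟨by positivity⟩
  haveI : NeZero (2*p) := ⟨by positivity⟩
  have hz1 : (zmultiplesHom (ZMod (2*p)) ((p:ℕ) : ZMod (2*p))) ((6:ℕ):ℤ) = 0 := by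
    show ((6:ℕ):ℤ) • ((p:ℕ) : ZMod (2*p)) = 0
    rw [zsmul_eq_mul]
    have : (((6:ℕ):ℤ) : ZMod (2*p)) * ((p:ℕ) : ZMod (2*p)) = (((6*p : ℤ)) : ZMod (2*p)) := by
      push_cast; ring
    rw [this, ZMod.intCast_zmod_eq_zero_iff_dvd]
    exact ⟨3, by push_cast; ring⟩
  have hz2 : (zmultiplesHom (ZMod (2*p)) (-1 : ZMod (2*p))) ((2*p^2:ℕ):ℤ) = 0 := by
    show ((2*p^2:ℕ):ℤ) • (-1 : ZMod (2*p)) = 0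
    rw [zsmul_eq_mul]
    have : (((2*p^2:ℕ):ℤ) : ZMod (2*p)) * (-1 : ZMod (2*p)) = (((-(2*p^2) : ℤ)) : ZMod (2*p)) := by
      push_cast; ring
    rw [this, ZMod.intCast_zmod_eq_zero_iff_dvd]
    exact ⟨-p, by push_cast; ring⟩
  set g1 : ZMod 6 →+ ZMod (2*p) := ZMod.lift 6 ⟨_, hz1⟩ with hg1
  set g2 : ZMod (2*p^2) →+ ZMod (2*p) := ZMod.lift (2*p^2) ⟨_, hz2⟩ with hg2
  set φ : (ZMod 6 × ZMod (2*p^2)) →+ ZMod (2*p) :=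
    g1.comp (AddMonoidHom.fst _ _) + g2.comp (AddMonoidHom.snd _ _) with hφ0
  have happ : ∀ v : ZMod 6 × ZMod (2*p^2), φ v = g1 v.1 + g2 v.2 := fun v => rfl
  have hgv1 : ∀ x : ZMod 6, g1 x = (((p:ℤ) * (x.val:ℤ) : ℤ) : ZMod (2*p)) := by
    intro x
    have ex : (((x.val:ℤ)) : ZMod 6) = x := by push_cast [natcast_val]; rfl
    conv_lhs => rw [← ex]
    rw [ZMod.lift_coe]
    show ((x.val:ℤ)) • ((p:ℕ) : ZMod (2*p)) = _
    rw [zsmul_eq_mul]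
    push_cast
    ring
  have hgv2 : ∀ y : ZMod (2*p^2), g2 y = ((-(y.val:ℤ) : ℤ) : ZMod (2*p)) := by
    intro y
    have ey : (((y.val:ℤ)) : ZMod (2*p^2)) = y := by push_cast [natcast_val]; rfl
    conv_lhs => rw [← ey]
    rw [ZMod.lift_coe]
    show ((y.val:ℤ)) • (-1 : ZMod (2*p)) = _
    rw [zsmul_eq_mul]
    push_cast
    ring
  have hφ : ∀ v : ZMod 6 × ZMod (2*p^2),
      φ v = (((p:ℤ) * (v.1.val:ℤ) - (v.2.val:ℤ) : ℤ) : ZMod (2*p)) := by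
    intro v
    rw [happ, hgv1, hgv2]
    push_cast
    ring
  have hker : φ.ker = AddSubgroup.zmultiples (((1:ZMod 6), ((p:ℕ) : ZMod (2*p^2)))
      : ZMod 6 × ZMod (2*p^2)) := by
    ext v
    rw [AddMonoidHom.mem_ker, hφ, ZMod.intCast_zmod_eq_zero_iff_dvd, memP_iff hp h3]
    have : ((2*p:ℕ):ℤ) = 2*(p:ℤ) := by push_cast; ring
    rw [this]
  have hsurj : Function.Surjective φ := by
    intro t
    refine ⟨((0 : ZMod 6), (((-(t.val:ℤ)) : ℤ) : ZMod (2*p^2))), ?_⟩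
    rw [happ]
    change g1 0 + g2 (((-(t.val:ℤ)) : ℤ) : ZMod (2*p^2)) = t
    rw [map_zero, zero_add, ZMod.lift_coe]
    show (-(t.val:ℤ)) • (-1 : ZMod (2*p)) = t
    rw [zsmul_eq_mul]
    push_cast [natcast_val]
    ring
  have hcop2 : Nat.Coprime 2 p := (Nat.coprime_primes (by norm_num) hp).mpr (by omega)
  exact ⟨((QuotientAddGroup.quotientAddEquivOfEq hker.symm).trans
    (QuotientAddGroup.quotientKerEquivOfSurjective φ hsurj)).trans
    (ZMod.chineseRemainder hcop2).toAddEquiv⟩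

/-- For H = ⟨(3,p)⟩ ⊆ D = (Z/6) ⊕ (Z/2p²), the orthogonal complement H^⊥
equals ⟨(1,p)⟩ ≅ C₃ ⊕ C_{2p}, and D/H^⊥ ≅ C₂ ⊕ C_p. -/
theorem stmt_3 (p : ℕ) (hp : p.Prime) (h3 : 3 < p) :
    let x2 : ZMod 6 × ZMod (2 * p ^ 2) := ((3 : ZMod 6), ((p : ℕ) : ZMod (2 * p ^ 2)))
    let y1 : ZMod 6 × ZMod (2 * p ^ 2) := ((1 : ZMod 6), ((p : ℕ) : ZMod (2 * p ^ 2)))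
    let P : AddSubgroup (ZMod 6 × ZMod (2 * p ^ 2)) := AddSubgroup.zmultiples y1
    ({v : ZMod 6 × ZMod (2 * p ^ 2) | ∀ h ∈ AddSubgroup.zmultiples x2, BzeroD3 p v h}
        = (P : Set (ZMod 6 × ZMod (2 * p ^ 2)))) ∧
    Nonempty (P ≃+ (ZMod 3 × ZMod (2 * p))) ∧
    Nonempty (((ZMod 6 × ZMod (2 * p ^ 2)) ⧸ P) ≃+ (ZMod 2 × ZMod p)) := by
  intro x2 y1 P
  refine ⟨?_, ?_, ?_⟩
  · ext v
    simp only [Set.mem_setOf_eq, SetLike.mem_coe]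
    exact part1 hp h3 v
  · exact part2 hp h3
  · exact part3 hp h3
end

section
/- Let A = [[0,1],[3,0]]. The set { ᵗW·A + ᵗA·W : W ∈ M₂(Z) } equals the set of all integer symmetric matrices of the form [[6a, b],[b, 2c]] with a, b, c ∈ Z. -/
open Matrix

/-- For A = [[0,1],[3,0]], the set { ᵗW·A + ᵗA·W : W ∈ M₂(Z) } equals the
set of all integer symmetric matrices [[6a,b],[b,2c]]. -/
theorem stmt_8 :
    {S : Matrix (Fin 2) (Fin 2) ℤ |
        ∃ W : Matrix (Fin 2) (Fin 2) ℤ, S = Wᵀ * !![0, 1; 3, 0] + (!![0, 1; 3, 0] : Matrix (Fin 2) (Fin 2) ℤ)ᵀ * W}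
      = {S : Matrix (Fin 2) (Fin 2) ℤ | ∃ a b c : ℤ, S = !![6 * a, b; b, 2 * c]} := by
  ext S
  constructor
  · rintro ⟨W, rfl⟩
    refine ⟨W 1 0, W 0 0 + 3 * W 1 1, W 0 1, ?_⟩
    ext i j
    fin_cases i <;> fin_cases j <;>
      simp [Matrix.mul_apply, Fin.sum_univ_two, Matrix.transpose_apply, Matrix.vecHead, Matrix.vecTail] <;> ring
  · rintro ⟨a, b, c, rfl⟩
    refine ⟨!![b, c; a, 0], ?_⟩
    ext i j
    fin_cases i <;> fin_cases j <;>
      simp [Matrix.mul_apply, Fin.sum_univ_two, Matrix.transpose_apply, Matrix.vecHead, Matrix.vecTail] <;> ring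
end
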